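/- Let Gⁱ be a spray on U, let F : U × (ℝⁿ∖{0}) → ℝ be smooth, positive, positively 1-homogeneous in y, and satisfy δF/δxʲ = 0 for all j (with respect to the connection of G). Suppose G has constant flag curvature κ ∈ ℝ in the sense that its Jacobi endomorphism is Rⁱⱼ = κ(F² δⁱⱼ − F (∂F/∂yʲ) yⁱ). Then for any λ ∈ ℝ the projectively changed spray G̃ⁱ = Gⁱ + λF yⁱ has Jacobi endomorphism R̃ⁱⱼ = (κ + λ²)(F² δⁱⱼ − F (∂F/∂yʲ) yⁱ); in particular G̃ has constant flag curvature κ + λ² and is isotropic, i.e., R̃ⁱⱼ = λ̃ δⁱⱼ + η̃ⱼ yⁱ with λ̃ = (κ+λ²)F² and η̃ⱼ = −(κ+λ²)F ∂F/∂yʲ. -/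

import Mathlib

namespace PM

abbrev E (n : ℕ) := (Fin n → ℝ) × (Fin n → ℝ)

noncomputable def pdx {n : ℕ} (i : Fin n) (f : E n → ℝ) (z : E n) : ℝ :=
  fderiv ℝ f z (Pi.single i 1, 0)

noncomputable def pdy {n : ℕ} (i : Fin n) (f : E n → ℝ) (z : E n) : ℝ :=
  fderiv ℝ f z (0, Pi.single i 1)

def Dom {n : ℕ} (U : Set (Fin n → ℝ)) : Set (E n) := U ×ˢ {y : Fin n → ℝ | y ≠ 0}

/-- A spray in local coordinates: an `n`-tuple of smooth functions on
`U × (ℝⁿ∖{0})`, positively `2`-homogeneous in `y`. -/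
def IsSpray {n : ℕ} (U : Set (Fin n → ℝ)) (G : Fin n → E n → ℝ) : Prop :=
  (∀ i, ContDiffOn ℝ (⊤ : ℕ∞) (G i) (Dom U)) ∧
  ∀ i, ∀ x ∈ U, ∀ y : Fin n → ℝ, y ≠ 0 → ∀ L : ℝ, 0 < L →
    G i (x, L • y) = L ^ 2 * G i (x, y)

/-- Nonlinear connection `Nⁱⱼ = ∂Gⁱ/∂yʲ`. -/
noncomputable def Nc {n : ℕ} (G : Fin n → E n → ℝ) (i j : Fin n) (z : E n) : ℝ :=
  pdy j (G i) z

/-- Horizontal derivative `δf/δxʲ = ∂f/∂xʲ − Nᵏⱼ ∂f/∂yᵏ`. -/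
noncomputable def delx {n : ℕ} (G : Fin n → E n → ℝ) (j : Fin n) (f : E n → ℝ) (z : E n) : ℝ :=
  pdx j f z - ∑ k, Nc G k j z * pdy k f z

/-- Spray derivative `S(f) = yᵏ ∂f/∂xᵏ − 2Gᵏ ∂f/∂yᵏ`. -/
noncomputable def Sder {n : ℕ} (G : Fin n → E n → ℝ) (f : E n → ℝ) (z : E n) : ℝ :=
  (∑ k, z.2 k * pdx k f z) - 2 * ∑ k, G k z * pdy k f z

/-- Curvature tensor `Rⁱⱼₖ = δNⁱⱼ/δxᵏ − δNⁱₖ/δxʲ`. -/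
noncomputable def Rcurv {n : ℕ} (G : Fin n → E n → ℝ) (i j k : Fin n) (z : E n) : ℝ :=
  delx G k (Nc G i j) z - delx G j (Nc G i k) z

/-- Jacobi endomorphism `Rⁱⱼ = 2 δGⁱ/δxʲ − S(Nⁱⱼ) + Nⁱₖ Nᵏⱼ`. -/
noncomputable def RJac {n : ℕ} (G : Fin n → E n → ℝ) (i j : Fin n) (z : E n) : ℝ :=
  2 * delx G j (G i) z - Sder G (Nc G i j) z + ∑ k, Nc G i k z * Nc G k j z

noncomputable def sq {n : ℕ} (F : E n → ℝ) : E n → ℝ := fun w => F w ^ 2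

/-- The `2n×2n` matrix of `dθ` for a semi-basic 1-form `θ`. -/
noncomputable def dthetaMat {n : ℕ} (θ : Fin n → E n → ℝ) (z : E n) :
    Matrix (Fin n ⊕ Fin n) (Fin n ⊕ Fin n) ℝ :=
  Matrix.fromBlocks
    (Matrix.of fun i j => pdx i (θ j) z - pdx j (θ i) z)
    (Matrix.of fun i j => -(pdy j (θ i) z))
    (Matrix.of fun i j => pdy i (θ j) z)
    0

/-- Finsler function in local coordinates. -/
def IsFinsler {n : ℕ} (U : Set (Fin n → ℝ)) (F : E n → ℝ) : Prop :=
  ContinuousOn F (U ×ˢ (Set.univ : Set (Fin n → ℝ))) ∧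
  ContDiffOn ℝ (⊤ : ℕ∞) F (Dom U) ∧
  (∀ z ∈ Dom U, 0 < F z) ∧
  (∀ x ∈ U, F (x, 0) = 0) ∧
  (∀ x ∈ U, ∀ y : Fin n → ℝ, ∀ L : ℝ, 0 < L → F (x, L • y) = L * F (x, y)) ∧
  (∀ z ∈ Dom U,
    (Matrix.of (fun i j : Fin n => (1 / 2 : ℝ) * pdy i (pdy j (sq F)) z)).rank = n)

/-- Geodesic coefficients of a Finsler function:
`yᵏ ∂²F²/∂xᵏ∂yⁱ − 2G_Fᵏ ∂²F²/∂yᵏ∂yⁱ = ∂F²/∂xⁱ`. -/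
def IsGeodesicCoeffs {n : ℕ} (U : Set (Fin n → ℝ)) (F : E n → ℝ)
    (GF : Fin n → E n → ℝ) : Prop :=
  (∀ i, ContDiffOn ℝ (⊤ : ℕ∞) (GF i) (Dom U)) ∧
  ∀ z ∈ Dom U, ∀ i : Fin n,
    (∑ k, z.2 k * pdx k (pdy i (sq F)) z)
      - 2 * ∑ k, GF k z * pdy k (pdy i (sq F)) z = pdx i (sq F) z

/-- Positively 1-homogeneous in `y`. -/
def PosHomog1 {n : ℕ} (U : Set (Fin n → ℝ)) (P : E n → ℝ) : Prop :=
  ∀ x ∈ U, ∀ y : Fin n → ℝ, y ≠ 0 → ∀ L : ℝ, 0 < L → P (x, L • y) = L * P (x, y)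

/-- A spray is projectively metrizable if `Gⁱ = G_Fⁱ + P yⁱ` for a Finsler
function `F` with geodesic coefficients `G_Fⁱ` and a smooth positively
1-homogeneous `P`. -/
def ProjectivelyMetrizable {n : ℕ} (U : Set (Fin n → ℝ)) (G : Fin n → E n → ℝ) : Prop :=
  ∃ (F : E n → ℝ) (GF : Fin n → E n → ℝ) (P : E n → ℝ),
    IsFinsler U F ∧ IsGeodesicCoeffs U F GF ∧
    ContDiffOn ℝ (⊤ : ℕ∞) P (Dom U) ∧ PosHomog1 U P ∧
    ∀ z ∈ Dom U, ∀ i, G i z = GF i z + P z * z.2 i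


open scoped ContDiff

section Aux
variable {n : ℕ}
/-- directional derivative -/
noncomputable def pd (v : E n) (f : E n → ℝ) (z : E n) : ℝ := fderiv ℝ f z v

lemma pdx_eq (i : Fin n) (f : E n → ℝ) : pdx i f = pd (Pi.single i 1, 0) f := rfl
lemma pdy_eq (i : Fin n) (f : E n → ℝ) : pdy i f = pd (0, Pi.single i 1) f := rfl

lemma isOpen_dom {U : Set (Fin n → ℝ)} (hU : IsOpen U) : IsOpen (Dom U) := by
  apply hU.prod
  exact isOpen_compl_singleton

lemma pd_add {f g : E n → ℝ} {z : E n} (hf : DifferentiableAt ℝ f z)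
    (hg : DifferentiableAt ℝ g z) (v : E n) :
    pd v (fun w => f w + g w) z = pd v f z + pd v g z := by
  simp [pd, fderiv_fun_add hf hg]

lemma pd_mul {f g : E n → ℝ} {z : E n} (hf : DifferentiableAt ℝ f z)
    (hg : DifferentiableAt ℝ g z) (v : E n) :
    pd v (fun w => f w * g w) z = pd v f z * g z + f z * pd v g z := by
  simp [pd, fderiv_fun_mul hf hg]; ring

lemma pd_const (c : ℝ) (z v : E n) : pd v (fun _ => c) z = 0 := by
  simp [pd]

lemma pd_const_mul {f : E n → ℝ} {z : E n} (hf : DifferentiableAt ℝ f z) (c : ℝ) (v : E n) :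
    pd v (fun w => c * f w) z = c * pd v f z := by
  simp [pd, fderiv_const_mul hf]

lemma pd_coord (i : Fin n) (z v : E n) : pd v (fun w => w.2 i) z = v.2 i := by
  have : (fun w : E n => w.2 i) = fun w : E n =>
      ((ContinuousLinearMap.proj i).comp (ContinuousLinearMap.snd ℝ (Fin n → ℝ) (Fin n → ℝ))) w := rfl
  rw [pd, this, ContinuousLinearMap.fderiv]
  rfl

lemma pd_congr {s : Set (E n)} (hs : IsOpen s) {f g : E n → ℝ}
    (h : ∀ w ∈ s, f w = g w) {z : E n} (hz : z ∈ s) (v : E n) :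
    pd v f z = pd v g z := by
  have : f =ᶠ[nhds z] g := Filter.eventually_of_mem (hs.mem_nhds hz) h
  rw [pd, pd, this.fderiv_eq]

lemma contDiffOn_pd {s : Set (E n)} (hs : IsOpen s) {f : E n → ℝ}
    (hf : ContDiffOn ℝ ∞ f s) (v : E n) : ContDiffOn ℝ ∞ (pd v f) s := by
  have h1 : ContDiffOn ℝ ∞ (fderiv ℝ f) s := hf.fderiv_of_isOpen hs (by norm_num)
  exact (ContinuousLinearMap.apply ℝ ℝ v).contDiff.comp_contDiffOn h1

lemma diffAt {s : Set (E n)} (hs : IsOpen s) {f : E n → ℝ}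
    (hf : ContDiffOn ℝ ∞ f s) {z : E n} (hz : z ∈ s) : DifferentiableAt ℝ f z :=
  (hf.contDiffAt (hs.mem_nhds hz)).differentiableAt (by norm_num)

lemma pd_comm {s : Set (E n)} (hs : IsOpen s) {f : E n → ℝ}
    (hf : ContDiffOn ℝ ∞ f s) {z : E n} (hz : z ∈ s) (v w : E n) :
    pd v (pd w f) z = pd w (pd v f) z := by
  have hfa : ContDiffAt ℝ ∞ f z := hf.contDiffAt (hs.mem_nhds hz)
  have hdf : DifferentiableAt ℝ (fderiv ℝ f) z :=
    (hfa.fderiv_right (m := ∞) (by norm_num)).differentiableAt (by norm_num)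
  have hsymm : IsSymmSndFDerivAt ℝ f z := hfa.isSymmSndFDerivAt (by rw [minSmoothness_of_isRCLikeNormedField]; exact WithTop.coe_le_coe.mpr le_top)
  have key : ∀ u u' : E n, pd u (pd u' f) z = fderiv ℝ (fderiv ℝ f) z u u' := by
    intro u u'
    have h0 : pd u' f = fun y => (fderiv ℝ f y) u' := rfl
    rw [pd, h0, fderiv_clm_apply hdf (differentiableAt_const u')]
    simp
  rw [key, key, hsymm v w]




lemma pd_sum {ι : Type*} [Fintype ι] {f : ι → E n → ℝ} {z : E n}
    (hf : ∀ k, DifferentiableAt ℝ (f k) z) (v : E n) :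
    pd v (fun w => ∑ k, f k w) z = ∑ k, pd v (f k) z := by
  have : fderiv ℝ (fun w => ∑ k ∈ Finset.univ, f k w) z
      = ∑ k ∈ Finset.univ, fderiv ℝ (f k) z := fderiv_fun_sum (fun k _ => hf k)
  simp only [pd, this]
  simp

lemma sum_single_pair (y : Fin n → ℝ) :
    ((0 : Fin n → ℝ), y) = ∑ k, y k • (((0 : Fin n → ℝ), Pi.single k 1) : E n) := by
  rw [Prod.ext_iff]
  constructor
  · simp [Prod.fst_sum]
  · simp only [Prod.snd_sum, Prod.smul_snd]
    funext j
    simp [Pi.single_apply, Finset.sum_apply, mul_comm]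

lemma fderiv_apply_0y {f : E n → ℝ} {z : E n} (hf : DifferentiableAt ℝ f z) :
    fderiv ℝ f z ((0 : Fin n → ℝ), z.2) = ∑ k, z.2 k * pdy k f z := by
  rw [sum_single_pair z.2, map_sum]
  refine Finset.sum_congr rfl fun k _ => ?_
  rw [map_smul]
  rfl

lemma euler {U : Set (Fin n → ℝ)} (hU : IsOpen U) {f : E n → ℝ}
    (hf : ContDiffOn ℝ ∞ f (Dom U)) (d : ℕ) (hd : 0 < d)
    (hhom : ∀ x ∈ U, ∀ y : Fin n → ℝ, y ≠ 0 → ∀ L : ℝ, 0 < L → f (x, L • y) = L ^ d * f (x, y))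
    {z : E n} (hz : z ∈ Dom U) : ∑ k, z.2 k * pdy k f z = d * f z := by
  have hx : z.1 ∈ U := hz.1
  have hy : z.2 ≠ 0 := hz.2
  have hdiff : DifferentiableAt ℝ f z := diffAt (isOpen_dom hU) hf hz
  have hc : HasDerivAt (fun L : ℝ => ((z.1, L • z.2) : E n)) (((0 : Fin n → ℝ), z.2)) 1 := by
    have h2 : HasDerivAt (fun L : ℝ => L • z.2) ((1:ℝ) • z.2) 1 :=
      (hasDerivAt_id (1:ℝ)).smul_const z.2
    simpa using (hasDerivAt_const (1:ℝ) z.1).prodMk h2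
  have h1 : HasDerivAt (fun L : ℝ => f (z.1, L • z.2))
      (fderiv ℝ f z (((0 : Fin n → ℝ), z.2))) 1 := by
    have hz' : HasFDerivAt f (fderiv ℝ f z) ((z.1, (1:ℝ) • z.2)) := by
      simpa using hdiff.hasFDerivAt
    exact hz'.comp_hasDerivAt 1 hc
  have h2 : HasDerivAt (fun L : ℝ => L ^ d * f z) ((d : ℝ) * 1 ^ (d - 1) * f z) 1 :=
    (hasDerivAt_pow d 1).mul_const (f z)
  have heq : (fun L : ℝ => L ^ d * f z) =ᶠ[nhds 1] fun L : ℝ => f (z.1, L • z.2) := by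
    filter_upwards [isOpen_Ioi.mem_nhds (show (0:ℝ) < 1 by norm_num)] with L hL
    rw [hhom z.1 hx z.2 hy L hL]
  have h3 : HasDerivAt (fun L : ℝ => f (z.1, L • z.2)) ((d : ℝ) * 1 ^ (d - 1) * f z) 1 :=
    h2.congr_of_eventuallyEq heq.symm
  have := h1.unique h3
  rw [fderiv_apply_0y hdiff] at this
  simpa using this

def ex (k : Fin n) : E n := (Pi.single k 1, 0)
def ey (k : Fin n) : E n := (0, Pi.single k 1)
lemma pdx_pd (k : Fin n) (f : E n → ℝ) : pdx k f = pd (ex k) f := rfl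
lemma pdy_pd (k : Fin n) (f : E n → ℝ) : pdy k f = pd (ey k) f := rfl
lemma ex_snd (k i : Fin n) : (ex k).2 i = 0 := rfl
lemma ey_snd (k i : Fin n) : (ey k).2 i = if i = k then 1 else 0 := by
  simp [ey, Pi.single_apply]

lemma diff_coord (i : Fin n) (z : E n) : DifferentiableAt ℝ (fun w : E n => w.2 i) z := by
  have : (fun w : E n => w.2 i) = fun w : E n =>
      ((ContinuousLinearMap.proj i).comp (ContinuousLinearMap.snd ℝ (Fin n → ℝ) (Fin n → ℝ))) w := rfl
  rw [this]
  exact ContinuousLinearMap.differentiableAt _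

section ids
variable {U : Set (Fin n → ℝ)} {G : Fin n → E n → ℝ} {F : E n → ℝ} {z : E n}

/-- Euler for a 1-homogeneous `F`. -/
lemma eulerF (hU : IsOpen U) (hF : ContDiffOn ℝ ∞ F (Dom U))
    (hFh : ∀ x ∈ U, ∀ y : Fin n → ℝ, y ≠ 0 → ∀ L : ℝ, 0 < L → F (x, L • y) = L * F (x, y))
    (hz : z ∈ Dom U) : ∑ k, z.2 k * pd (ey k) F z = F z := by
  have := euler hU hF 1 one_pos (fun x hx y hy L hL => by rw [hFh x hx y hy L hL, pow_one]) hz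
  simpa [pdy_pd] using this

variable (hU : IsOpen U)
    (hGs : ∀ i, ContDiffOn ℝ ∞ (G i) (Dom U))
    (hGh : ∀ i, ∀ x ∈ U, ∀ y : Fin n → ℝ, y ≠ 0 → ∀ L : ℝ, 0 < L →
      G i (x, L • y) = L ^ 2 * G i (x, y))
    (hFs : ContDiffOn ℝ ∞ F (Dom U))
    (hF1 : ∀ x ∈ U, ∀ y : Fin n → ℝ, y ≠ 0 → ∀ L : ℝ, 0 < L → F (x, L • y) = L * F (x, y))
    (hhc : ∀ w ∈ Dom U, ∀ j, pd (ex j) F w = ∑ k, pd (ey j) (G k) w * pd (ey k) F w)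

include hU hGs hGh in
/-- Euler for the 2-homogeneous `G i`: `∑ yᵏ Nⁱₖ = 2Gⁱ`. -/
lemma eulerG (hz : z ∈ Dom U) (i : Fin n) :
    ∑ k, z.2 k * pd (ey k) (G i) z = 2 * G i z := by
  have := euler hU (hGs i) 2 two_pos (hGh i) hz
  simpa [pdy_pd] using this

include hU hGs hGh in
lemma eulerN' (hz : z ∈ Dom U) (i j : Fin n) :
    ∑ k, z.2 k * pd (ey j) (pd (ey k) (G i)) z = pd (ey j) (G i) z := by
  have hDom := isOpen_dom hU
  have hfun : ∀ w ∈ Dom U, (∑ k, w.2 k * pd (ey k) (G i) w) = 2 * G i w :=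
    fun w hw => eulerG hU hGs hGh hw i
  have hL := pd_congr (f := fun w => ∑ k, w.2 k * pd (ey k) (G i) w)
    (g := fun w => 2 * G i w) hDom hfun hz (ey j)
  rw [pd_sum (fun k => (diff_coord k z).fun_mul
        (diffAt hDom (contDiffOn_pd hDom (hGs i) (ey k)) hz)) (ey j),
      pd_const_mul (diffAt hDom (hGs i) hz)] at hL
  have hterm : ∀ k, pd (ey j) (fun w => w.2 k * pd (ey k) (G i) w) z
      = (if k = j then 1 else 0) * pd (ey k) (G i) z
        + z.2 k * pd (ey j) (pd (ey k) (G i)) z := by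
    intro k
    rw [pd_mul (diff_coord k z) (diffAt hDom (contDiffOn_pd hDom (hGs i) (ey k)) hz),
        pd_coord, ey_snd]
  rw [Finset.sum_congr rfl (fun k _ => hterm k), Finset.sum_add_distrib] at hL
  simp only [ite_mul, one_mul, zero_mul, Finset.sum_ite_eq', Finset.mem_univ, if_true] at hL
  linarith

include hU hGs hGh in
lemma eulerN (hz : z ∈ Dom U) (i j : Fin n) :
    ∑ k, z.2 k * pd (ey k) (pd (ey j) (G i)) z = pd (ey j) (G i) z := by
  have hDom := isOpen_dom hU
  rw [Finset.sum_congr rfl (fun k _ => by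
    rw [pd_comm hDom (hGs i) hz (ey k) (ey j)])]
  exact eulerN' hU hGs hGh hz i j

include hU hFs hF1 in
lemma eulerF' (hz : z ∈ Dom U) : ∑ k, z.2 k * pd (ey k) F z = F z := eulerF hU hFs hF1 hz

include hU hFs hF1 in
lemma eulerFy (hz : z ∈ Dom U) (j : Fin n) :
    ∑ k, z.2 k * pd (ey k) (pd (ey j) F) z = 0 := by
  have hDom := isOpen_dom hU
  have hfun : ∀ w ∈ Dom U, (∑ k, w.2 k * pd (ey k) F w) = F w :=
    fun w hw => eulerF hU hFs hF1 hw
  have hL := pd_congr (f := fun w => ∑ k, w.2 k * pd (ey k) F w) (g := F)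
    hDom hfun hz (ey j)
  rw [pd_sum (fun k => (diff_coord k z).fun_mul
        (diffAt hDom (contDiffOn_pd hDom hFs (ey k)) hz)) (ey j)] at hL
  have hterm : ∀ k, pd (ey j) (fun w => w.2 k * pd (ey k) F w) z
      = (if k = j then 1 else 0) * pd (ey k) F z
        + z.2 k * pd (ey j) (pd (ey k) F) z := by
    intro k
    rw [pd_mul (diff_coord k z) (diffAt hDom (contDiffOn_pd hDom hFs (ey k)) hz),
        pd_coord, ey_snd]
  rw [Finset.sum_congr rfl (fun k _ => hterm k), Finset.sum_add_distrib] at hL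
  simp only [ite_mul, one_mul, zero_mul, Finset.sum_ite_eq', Finset.mem_univ, if_true] at hL
  have hswap : ∑ k, z.2 k * pd (ey k) (pd (ey j) F) z
      = ∑ k, z.2 k * pd (ey j) (pd (ey k) F) z :=
    Finset.sum_congr rfl (fun k _ => by rw [pd_comm hDom hFs hz (ey k) (ey j)])
  rw [hswap]
  linarith

include hU hGs hGh hFs hhc in
/-- `∑ yᵏ ∂F/∂xᵏ = 2 ∑ Gˡ ∂F/∂yˡ`, i.e. `S(F) = 0`. -/
lemma SF_eq (hz : z ∈ Dom U) :
    ∑ k, z.2 k * pd (ex k) F z = 2 * ∑ l, G l z * pd (ey l) F z := by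
  have h1 : ∑ k, z.2 k * pd (ex k) F z
      = ∑ k, ∑ l, pd (ey l) F z * (z.2 k * pd (ey k) (G l) z) := by
    refine Finset.sum_congr rfl fun k _ => ?_
    rw [hhc z hz k, Finset.mul_sum]
    exact Finset.sum_congr rfl fun l _ => by ring
  rw [h1, Finset.sum_comm]
  rw [Finset.sum_congr rfl (fun l _ => by
    rw [← Finset.mul_sum, eulerG hU hGs hGh hz l])]
  rw [Finset.mul_sum]
  exact Finset.sum_congr rfl fun l _ => by ring

include hU hGs hGh hFs hhc in
/-- `S(∂F/∂yʲ) = ∑ Nˡⱼ ∂F/∂yˡ`. -/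
lemma SFy_eq (hz : z ∈ Dom U) (j : Fin n) :
    ∑ k, z.2 k * pd (ex k) (pd (ey j) F) z
      = ∑ l, pd (ey l) F z * pd (ey j) (G l) z
        + 2 * ∑ l, G l z * pd (ey l) (pd (ey j) F) z := by
  have hDom := isOpen_dom hU
  have hterm : ∀ k, z.2 k * pd (ex k) (pd (ey j) F) z
      = ∑ l, (pd (ey l) F z * (z.2 k * pd (ey j) (pd (ey k) (G l)) z)
          + pd (ey l) (pd (ey j) F) z * (z.2 k * pd (ey k) (G l) z)) := by
    intro k
    have hc1 : pd (ex k) (pd (ey j) F) z = pd (ey j) (pd (ex k) F) z :=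
      pd_comm hDom hFs hz (ex k) (ey j)
    have hc2 : pd (ey j) (pd (ex k) F) z
        = pd (ey j) (fun w => ∑ l, pd (ey k) (G l) w * pd (ey l) F w) z :=
      pd_congr hDom (fun w hw => hhc w hw k) hz (ey j)
    have hc3 : pd (ey j) (fun w => ∑ l, pd (ey k) (G l) w * pd (ey l) F w) z
        = ∑ l, (pd (ey j) (pd (ey k) (G l)) z * pd (ey l) F z
            + pd (ey k) (G l) z * pd (ey j) (pd (ey l) F) z) := by
      rw [pd_sum (fun l => (diffAt hDom (contDiffOn_pd hDom (hGs l) (ey k)) hz).fun_mul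
            (diffAt hDom (contDiffOn_pd hDom hFs (ey l)) hz)) (ey j)]
      exact Finset.sum_congr rfl fun l _ =>
        pd_mul (diffAt hDom (contDiffOn_pd hDom (hGs l) (ey k)) hz)
          (diffAt hDom (contDiffOn_pd hDom hFs (ey l)) hz) (ey j)
    rw [hc1, hc2, hc3, Finset.mul_sum]
    refine Finset.sum_congr rfl fun l _ => ?_
    rw [pd_comm hDom hFs hz (ey l) (ey j)]
    ring
  rw [Finset.sum_congr rfl (fun k _ => hterm k), Finset.sum_comm]
  rw [Finset.sum_congr rfl (fun l _ => by
    rw [Finset.sum_add_distrib, ← Finset.mul_sum, ← Finset.mul_sum,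
        eulerN' hU hGs hGh hz l j, eulerG hU hGs hGh hz l])]
  rw [Finset.sum_add_distrib, Finset.mul_sum]
  congr 1
  exact Finset.sum_congr rfl fun l _ => by ring


section evals
variable (lam : ℝ)

include hU hGs hFs in
lemma pdy_Gt {w : E n} (hw : w ∈ Dom U) (i k : Fin n) :
    pd (ey k) (fun w => G i w + lam * F w * w.2 i) w
      = pd (ey k) (G i) w + lam * pd (ey k) F w * w.2 i
        + lam * F w * (if i = k then 1 else 0) := by
  have hDom := isOpen_dom hU
  have dF : DifferentiableAt ℝ F w := diffAt hDom hFs hw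
  rw [pd_add (diffAt hDom (hGs i) hw) ((dF.const_mul lam).fun_mul (diff_coord i w)),
      pd_mul (dF.const_mul lam) (diff_coord i w), pd_const_mul dF, pd_coord, ey_snd]
  ring

include hU hGs hFs in
lemma pdx_Gt {w : E n} (hw : w ∈ Dom U) (i j : Fin n) :
    pd (ex j) (fun w => G i w + lam * F w * w.2 i) w
      = pd (ex j) (G i) w + lam * pd (ex j) F w * w.2 i := by
  have hDom := isOpen_dom hU
  have dF : DifferentiableAt ℝ F w := diffAt hDom hFs hw
  rw [pd_add (diffAt hDom (hGs i) hw) ((dF.const_mul lam).fun_mul (diff_coord i w)),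
      pd_mul (dF.const_mul lam) (diff_coord i w), pd_const_mul dF, pd_coord, ex_snd]
  ring

include hU hGs hFs in
lemma pd_NGt (hz : z ∈ Dom U) (v : E n) (i j : Fin n) :
    pd v (pd (ey j) (fun w => G i w + lam * F w * w.2 i)) z
      = pd v (pd (ey j) (G i)) z + lam * pd v (pd (ey j) F) z * z.2 i
        + lam * pd (ey j) F z * v.2 i
        + lam * pd v F z * (if i = j then 1 else 0) := by
  have hDom := isOpen_dom hU
  have dF : DifferentiableAt ℝ F z := diffAt hDom hFs hz
  have dN : DifferentiableAt ℝ (pd (ey j) (G i)) z :=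
    diffAt hDom (contDiffOn_pd hDom (hGs i) (ey j)) hz
  have dFy : DifferentiableAt ℝ (pd (ey j) F) z :=
    diffAt hDom (contDiffOn_pd hDom hFs (ey j)) hz
  have hcg : pd v (pd (ey j) (fun w => G i w + lam * F w * w.2 i)) z
      = pd v (fun w => pd (ey j) (G i) w + lam * pd (ey j) F w * w.2 i
          + lam * F w * (if i = j then 1 else 0)) z :=
    pd_congr hDom (fun w hw => pdy_Gt hU hGs hFs lam hw i j) hz v
  rw [hcg,
      pd_add ((dN.fun_add ((dFy.const_mul lam).fun_mul (diff_coord i z))))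
        ((dF.const_mul lam).fun_mul (differentiableAt_const _)),
      pd_add dN ((dFy.const_mul lam).fun_mul (diff_coord i z)),
      pd_mul (dFy.const_mul lam) (diff_coord i z),
      pd_mul (dF.const_mul lam) (differentiableAt_const _),
      pd_const_mul dFy, pd_const_mul dF, pd_coord, pd_const]
  ring


include hU hGs hGh hFs hF1 hhc in
lemma sumNN (hz : z ∈ Dom U) (i j : Fin n) :
    ∑ k, pd (ey k) (fun w => G i w + lam * F w * w.2 i) z
        * pd (ey j) (fun w => G k w + lam * F w * w.2 k) z
      = ∑ k, pd (ey k) (G i) z * pd (ey j) (G k) z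
        + lam * z.2 i * pd (ex j) F z
        + 2 * (lam * F z) * pd (ey j) (G i) z
        + 2 * lam * G i z * pd (ey j) F z
        + 3 * lam ^ 2 * F z * pd (ey j) F z * z.2 i
        + lam ^ 2 * F z ^ 2 * (if i = j then 1 else 0) := by
  have hterm : ∀ k : Fin n,
      pd (ey k) (fun w => G i w + lam * F w * w.2 i) z
        * pd (ey j) (fun w => G k w + lam * F w * w.2 k) z
      = pd (ey k) (G i) z * pd (ey j) (G k) z
        + (lam * pd (ey j) F z) * (z.2 k * pd (ey k) (G i) z)
        + (if k = j then (lam * F z) * pd (ey k) (G i) z else 0)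
        + (lam * z.2 i) * (pd (ey j) (G k) z * pd (ey k) F z)
        + (lam * pd (ey j) F z * (lam * z.2 i)) * (z.2 k * pd (ey k) F z)
        + (if k = j then (lam * F z * (lam * z.2 i)) * pd (ey k) F z else 0)
        + (if i = k then (lam * F z) * pd (ey j) (G k) z else 0)
        + (if i = k then (lam * F z * (lam * pd (ey j) F z)) * z.2 k else 0)
        + (if i = k then (if k = j then lam * F z * (lam * F z) else 0) else 0) := by
    intro k
    rw [pdy_Gt hU hGs hFs lam hz i k, pdy_Gt hU hGs hFs lam hz k j]
    by_cases hik : i = k <;> by_cases hkj : k = j <;> by_cases hij : i = j <;>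
      simp_all <;> ring
  rw [Finset.sum_congr rfl fun k _ => hterm k]
  simp only [Finset.sum_add_distrib, ← Finset.mul_sum, Finset.sum_ite_eq',
    Finset.sum_ite_eq, Finset.mem_univ, if_true]
  rw [eulerG hU hGs hGh hz i, eulerF hU hFs hF1 hz, ← hhc z hz j]
  by_cases hij : i = j <;> simp [hij] <;> ring


include hU hGs hGh hFs hF1 hhc in
lemma sumSder (hz : z ∈ Dom U) (i j : Fin n) :
    (∑ k, z.2 k * pd (ex k) (pd (ey j) (fun w => G i w + lam * F w * w.2 i)) z)
      - 2 * ∑ k, (G k z + lam * F z * z.2 k)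
          * pd (ey k) (pd (ey j) (fun w => G i w + lam * F w * w.2 i)) z
    = ((∑ k, z.2 k * pd (ex k) (pd (ey j) (G i)) z)
        - 2 * ∑ k, G k z * pd (ey k) (pd (ey j) (G i)) z)
      + lam * z.2 i * pd (ex j) F z
      - 2 * lam * G i z * pd (ey j) F z
      - 2 * (lam * F z) * pd (ey j) (G i) z
      - 2 * lam ^ 2 * F z * pd (ey j) F z * z.2 i
      - 2 * lam ^ 2 * F z ^ 2 * (if i = j then 1 else 0) := by
  have hfx : pd (ex j) F z = ∑ l, pd (ey l) F z * pd (ey j) (G l) z := by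
    rw [hhc z hz j]; exact Finset.sum_congr rfl fun l _ => mul_comm _ _
  have h1 : ∑ k, z.2 k * pd (ex k) (pd (ey j) (fun w => G i w + lam * F w * w.2 i)) z
      = ∑ k, (z.2 k * pd (ex k) (pd (ey j) (G i)) z
          + (lam * z.2 i) * (z.2 k * pd (ex k) (pd (ey j) F) z)
          + (lam * (if i = j then 1 else 0)) * (z.2 k * pd (ex k) F z)) := by
    refine Finset.sum_congr rfl fun k _ => ?_
    rw [pd_NGt hU hGs hFs lam hz (ex k) i j, ex_snd]
    ring
  have h2 : ∑ k, (G k z + lam * F z * z.2 k)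
        * pd (ey k) (pd (ey j) (fun w => G i w + lam * F w * w.2 i)) z
      = ∑ k, (G k z * pd (ey k) (pd (ey j) (G i)) z
          + (lam * z.2 i) * (G k z * pd (ey k) (pd (ey j) F) z)
          + (if i = k then (lam * pd (ey j) F z) * G k z else 0)
          + (lam * (if i = j then 1 else 0)) * (G k z * pd (ey k) F z)
          + (lam * F z) * (z.2 k * pd (ey k) (pd (ey j) (G i)) z)
          + (lam * F z * (lam * z.2 i)) * (z.2 k * pd (ey k) (pd (ey j) F) z)
          + (if i = k then (lam * F z * (lam * pd (ey j) F z)) * z.2 k else 0)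
          + (lam * F z * (lam * (if i = j then 1 else 0))) * (z.2 k * pd (ey k) F z)) := by
    refine Finset.sum_congr rfl fun k _ => ?_
    rw [pd_NGt hU hGs hFs lam hz (ey k) i j, ey_snd]
    by_cases hik : i = k <;> by_cases hij : i = j <;> simp_all <;> ring
  rw [h1, h2]
  simp only [Finset.sum_add_distrib, ← Finset.mul_sum, Finset.sum_ite_eq,
    Finset.mem_univ, if_true]
  rw [SFy_eq hU hGs hGh hFs hhc hz j, SF_eq hU hGs hGh hFs hhc hz,
      eulerN hU hGs hGh hz i j, eulerFy hU hFs hF1 hz j,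
      eulerF hU hFs hF1 hz, hfx]
  ring

include hU hGs hGh hFs hF1 hhc in
lemma sumHA (hz : z ∈ Dom U) (i j : Fin n) :
    pd (ex j) (fun w => G i w + lam * F w * w.2 i) z
      - ∑ k, pd (ey j) (fun w => G k w + lam * F w * w.2 k) z
          * pd (ey k) (fun w => G i w + lam * F w * w.2 i) z
    = (pd (ex j) (G i) z - ∑ k, pd (ey j) (G k) z * pd (ey k) (G i) z)
      - 2 * (lam * F z) * pd (ey j) (G i) z
      - 2 * lam * G i z * pd (ey j) F z
      - 3 * lam ^ 2 * F z * pd (ey j) F z * z.2 i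
      - lam ^ 2 * F z ^ 2 * (if i = j then 1 else 0) := by
  have hcomm : ∑ k, pd (ey j) (fun w => G k w + lam * F w * w.2 k) z
          * pd (ey k) (fun w => G i w + lam * F w * w.2 i) z
      = ∑ k, pd (ey k) (fun w => G i w + lam * F w * w.2 i) z
          * pd (ey j) (fun w => G k w + lam * F w * w.2 k) z :=
    Finset.sum_congr rfl fun k _ => mul_comm _ _
  have hcomm2 : ∑ k, pd (ey k) (G i) z * pd (ey j) (G k) z
      = ∑ k, pd (ey j) (G k) z * pd (ey k) (G i) z :=
    Finset.sum_congr rfl fun k _ => mul_comm _ _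
  rw [pdx_Gt hU hGs hFs lam hz i j, hcomm, sumNN hU hGs hGh hFs hF1 hhc lam hz i j,
      hcomm2]
  ring

end evals
end ids


end Aux

/-- Yang's example, computational core: if `G` has constant flag curvature `κ`
with respect to `F` (`Rⁱⱼ = κ(F² δⁱⱼ − F (∂F/∂yʲ) yⁱ)`) and `δF/δxʲ = 0`,
then the projectively changed spray `G̃ⁱ = Gⁱ + λF yⁱ` has Jacobi
endomorphism `R̃ⁱⱼ = (κ+λ²)(F² δⁱⱼ − F (∂F/∂yʲ) yⁱ)`; in particular `G̃` has
constant flag curvature `κ+λ²` and is isotropic. -/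
theorem yang_projective_change_flag_curvature {n : ℕ}
    (U : Set (Fin n → ℝ)) (hU : IsOpen U)
    (G : Fin n → E n → ℝ) (hG : IsSpray U G)
    (F : E n → ℝ) (hF : ContDiffOn ℝ (⊤ : ℕ∞) F (Dom U))
    (hFpos : ∀ z ∈ Dom U, 0 < F z)
    (hFh : PosHomog1 U F)
    (hFhc : ∀ z ∈ Dom U, ∀ j, delx G j F z = 0)
    (κ : ℝ)
    (hflag : ∀ z ∈ Dom U, ∀ i j,
      RJac G i j z
        = κ * (F z ^ 2 * (if i = j then (1:ℝ) else 0) - F z * pdy j F z * z.2 i))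
    (lam : ℝ) :
    ∀ z ∈ Dom U, ∀ i j,
      RJac (fun i z => G i z + lam * F z * z.2 i) i j z
        = (κ + lam ^ 2)
            * (F z ^ 2 * (if i = j then (1:ℝ) else 0) - F z * pdy j F z * z.2 i)
      ∧
      RJac (fun i z => G i z + lam * F z * z.2 i) i j z
        = ((κ + lam ^ 2) * F z ^ 2) * (if i = j then (1:ℝ) else 0)
            + (-((κ + lam ^ 2) * F z * pdy j F z)) * z.2 i := by
  have hGs : ∀ i, ContDiffOn ℝ ∞ (G i) (Dom U) := fun i => (hG.1 i).of_le (by simp)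
  have hGh := hG.2
  have hFs : ContDiffOn ℝ ∞ F (Dom U) := hF.of_le (by simp)
  have hF1 : ∀ x ∈ U, ∀ y : Fin n → ℝ, y ≠ 0 → ∀ L : ℝ, 0 < L →
      F (x, L • y) = L * F (x, y) := hFh
  have hhc : ∀ w ∈ Dom U, ∀ j, pd (ex j) F w = ∑ k, pd (ey j) (G k) w * pd (ey k) F w := by
    intro w hw j
    have h0 := hFhc w hw j
    rw [delx, sub_eq_zero] at h0
    exact h0
  intro z hz i j
  have hA := sumHA hU hGs hGh hFs hF1 hhc lam hz i j
  have hB := sumSder hU hGs hGh hFs hF1 hhc lam hz i j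
  have hC := sumNN hU hGs hGh hFs hF1 hhc lam hz i j
  have hfirst : RJac (fun i z => G i z + lam * F z * z.2 i) i j z
      = (κ + lam ^ 2)
          * (F z ^ 2 * (if i = j then (1:ℝ) else 0) - F z * pdy j F z * z.2 i) := by
    have hRG : RJac G i j z
        = 2 * (pd (ex j) (G i) z - ∑ k, pd (ey j) (G k) z * pd (ey k) (G i) z)
          - ((∑ k, z.2 k * pd (ex k) (pd (ey j) (G i)) z)
              - 2 * ∑ k, G k z * pd (ey k) (pd (ey j) (G i)) z)
          + ∑ k, pd (ey k) (G i) z * pd (ey j) (G k) z := rfl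
    calc RJac (fun i z => G i z + lam * F z * z.2 i) i j z
        = 2 * (pd (ex j) (fun w => G i w + lam * F w * w.2 i) z
              - ∑ k, pd (ey j) (fun w => G k w + lam * F w * w.2 k) z
                  * pd (ey k) (fun w => G i w + lam * F w * w.2 i) z)
          - ((∑ k, z.2 k * pd (ex k) (pd (ey j) (fun w => G i w + lam * F w * w.2 i)) z)
              - 2 * ∑ k, (G k z + lam * F z * z.2 k)
                  * pd (ey k) (pd (ey j) (fun w => G i w + lam * F w * w.2 i)) z)
          + ∑ k, pd (ey k) (fun w => G i w + lam * F w * w.2 i) z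
              * pd (ey j) (fun w => G k w + lam * F w * w.2 k) z := rfl
      _ = RJac G i j z + lam ^ 2 * F z ^ 2 * (if i = j then (1:ℝ) else 0)
            - lam ^ 2 * F z * pd (ey j) F z * z.2 i := by
          rw [hA, hB, hC, hRG]; ring
      _ = (κ + lam ^ 2)
          * (F z ^ 2 * (if i = j then (1:ℝ) else 0) - F z * pdy j F z * z.2 i) := by
          rw [hflag z hz i j]
          simp only [pdy_pd]
          ring
  exact ⟨hfirst, by rw [hfirst]; ring⟩


end PM
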